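/- The elliptic curve E_{t,s} : y^2 = x^3 + d(t^2-30t+1)x^2 - 8d^2 t(3t+1)(4t-7)x - 16d^3 t(4t^4-4t^3-40t^2+91t-4) over Q(s,t), where d = d_{t,s}, has j-invariant equal to (t^4 + 228 t^3 + 494 t^2 - 228 t + 1)^3 / (t (t^2 - 11 t - 1)^5). -/

import Mathlib

/-- The field `ℚ(s, t)` realized as `RatFunc (RatFunc ℚ)`,
with `s` the inner variable and `t` the outer variable. -/
noncomputable abbrev Kst : Type := RatFunc (RatFunc ℚ)

noncomputable def sv : Kst := RatFunc.C RatFunc.X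

noncomputable def tv : Kst := RatFunc.X

/-- `d = d_{t,s}`. -/
noncomputable def dv : Kst :=
  -4 * sv ^ 3 + (tv ^ 2 - 30 * tv + 1) * sv ^ 2 + 2 * tv * (3 * tv + 1) * (4 * tv - 7) * sv -
    tv * (4 * tv ^ 4 - 4 * tv ^ 3 - 40 * tv ^ 2 + 91 * tv - 4)

/-- The curve `E_{t,s} : y² = x³ + d(t²-30t+1)x² - 8d²t(3t+1)(4t-7)x
- 16d³t(4t⁴-4t³-40t²+91t-4)`. -/
noncomputable def Ets : WeierstrassCurve Kst :=
  { a₁ := 0, a₂ := dv * (tv ^ 2 - 30 * tv + 1), a₃ := 0,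
    a₄ := -8 * dv ^ 2 * tv * (3 * tv + 1) * (4 * tv - 7),
    a₆ := -16 * dv ^ 3 * tv * (4 * tv ^ 4 - 4 * tv ^ 3 - 40 * tv ^ 2 + 91 * tv - 4) }

/-!
`E_{t,s}` is the quadratic twist by `d` of the curve
`E_t : y² = x³ + (t²-30t+1)x² - 8t(3t+1)(4t-7)x - 16t(4t⁴-4t³-40t²+91t-4)`.
Twisting by `d` multiplies `c₄` by `d²` and `Δ` by `d⁶`, so `j(E_{t,s}) = j(E_t)`, and for `E_t`
one computes `c₄ = 16(t⁴+228t³+494t²-228t+1)` and `Δ = 4096 t(t²-11t-1)⁵`.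
-/

namespace WeierstrassCurve

section CommRing

variable {R : Type*} [CommRing R] (W : WeierstrassCurve R) (d : R)

/-- Meaningful when `W.a₁ = W.a₃ = 0`, i.e. for curves `y² = f(x)`: the twist `d y² = f(x)`,
rescaled by `(x, y) ↦ (x / d, y / d²)`. -/
def quadraticTwist : WeierstrassCurve R :=
  ⟨0, d * W.a₂, 0, d ^ 2 * W.a₄, d ^ 3 * W.a₆⟩

variable {W}

lemma quadraticTwist_c₄ (h₁ : W.a₁ = 0) (h₃ : W.a₃ = 0) :
    (W.quadraticTwist d).c₄ = d ^ 2 * W.c₄ := by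
  simp only [quadraticTwist, c₄, b₂, b₄, h₁, h₃]
  ring

lemma quadraticTwist_Δ (h₁ : W.a₁ = 0) (h₃ : W.a₃ = 0) :
    (W.quadraticTwist d).Δ = d ^ 6 * W.Δ := by
  simp only [quadraticTwist, Δ, b₂, b₄, b₆, b₈, h₁, h₃]
  ring

end CommRing

section Field

variable {K : Type*} [Field K]

lemma j_eq_c₄_pow_three_div_Δ (W : WeierstrassCurve K) [W.IsElliptic] :
    W.j = W.c₄ ^ 3 / W.Δ := by
  rw [j, Units.val_inv_eq_inv_val, coe_Δ', inv_mul_eq_div]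

lemma j_eq_of_eq_quadraticTwist {W W' : WeierstrassCurve K} (h₁ : W.a₁ = 0) (h₃ : W.a₃ = 0)
    {d : K} (hW' : W' = W.quadraticTwist d) [W.IsElliptic] [W'.IsElliptic] : W'.j = W.j := by
  subst hW'
  have hd : d ≠ 0 := by
    rintro rfl
    simpa [quadraticTwist_Δ _ h₁ h₃] using (W.quadraticTwist 0).isUnit_Δ.ne_zero
  rw [j_eq_c₄_pow_three_div_Δ, j_eq_c₄_pow_three_div_Δ, quadraticTwist_c₄ d h₁ h₃,
    quadraticTwist_Δ d h₁ h₃, mul_pow, ← pow_mul, mul_div_mul_left _ _ (pow_ne_zero _ hd)]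

end Field

end WeierstrassCurve

open WeierstrassCurve

noncomputable def Et : WeierstrassCurve Kst :=
  ⟨0, tv ^ 2 - 30 * tv + 1, 0, -8 * tv * (3 * tv + 1) * (4 * tv - 7),
    -16 * tv * (4 * tv ^ 4 - 4 * tv ^ 3 - 40 * tv ^ 2 + 91 * tv - 4)⟩

lemma Ets_eq_quadraticTwist : Ets = Et.quadraticTwist dv := by
  simp only [Ets, Et, quadraticTwist]
  congr 1 <;> ring

lemma Et_c₄ : Et.c₄ = 16 * (tv ^ 4 + 228 * tv ^ 3 + 494 * tv ^ 2 - 228 * tv + 1) := by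
  simp only [Et, c₄, b₂, b₄]
  ring

lemma Et_Δ : Et.Δ = 4096 * (tv * (tv ^ 2 - 11 * tv - 1) ^ 5) := by
  simp only [Et, Δ, b₂, b₄, b₆, b₈]
  ring

lemma tv_sq_sub_eleven_mul_tv_sub_one_ne_zero : tv ^ 2 - 11 * tv - 1 ≠ 0 := by
  have hp : (Polynomial.X ^ 2 - 11 * Polynomial.X - 1 : Polynomial (RatFunc ℚ)) ≠ 0 := by
    intro h
    simpa [Polynomial.coeff_X, Polynomial.coeff_one] using congrArg (Polynomial.coeff · 2) h
  simpa [tv, RatFunc.algebraMap_X, map_ofNat] using RatFunc.algebraMap_ne_zero hp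

lemma Et_Δ_ne_zero : Et.Δ ≠ 0 := by
  rw [Et_Δ]
  exact mul_ne_zero (by norm_num) (mul_ne_zero RatFunc.X_ne_zero
    (pow_ne_zero _ tv_sq_sub_eleven_mul_tv_sub_one_ne_zero))

instance : Et.IsElliptic := ⟨Et_Δ_ne_zero.isUnit⟩

lemma j_Et : Et.j = (tv ^ 4 + 228 * tv ^ 3 + 494 * tv ^ 2 - 228 * tv + 1) ^ 3 /
    (tv * (tv ^ 2 - 11 * tv - 1) ^ 5) := by
  rw [j_eq_c₄_pow_three_div_Δ, Et_c₄, Et_Δ, mul_pow,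
    show (16 : Kst) ^ 3 = 4096 by norm_num, mul_div_mul_left _ _ (by norm_num)]

/-- The j-invariant of `E_{t,s}` equals `(t⁴ + 228t³ + 494t² - 228t + 1)³ / (t(t² - 11t - 1)⁵)`. -/
theorem j_invariant_Ets [Ets.IsElliptic] :
    Ets.j = (tv ^ 4 + 228 * tv ^ 3 + 494 * tv ^ 2 - 228 * tv + 1) ^ 3 /
      (tv * (tv ^ 2 - 11 * tv - 1) ^ 5) := by
  rw [j_eq_of_eq_quadraticTwist rfl rfl Ets_eq_quadraticTwist, j_Et]
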